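/- Let C be a category with finite coproducts, X an object, and u : X ⟶ X an idempotent. Then condition (3) implies condition (2) for all morphisms f : T_r ⟶ T_s and all r, s if and only if u = 𝟙_X; that is, (∀ r s (f : T_r ⟶ T_s), u_r ≫ f = f ≫ u_s → (u_r ≫ f = f ∧ f ≫ u_s = f)) ↔ u = 𝟙_X. -/

import Mathlib

open CategoryTheory CategoryTheory.Limits

universe u v

variable {C : Type u} [Category.{v} C]

/-- `T X n` is the coproduct of `n` copies of `X`, indexed by `Fin n`. -/
noncomputable def T [HasFiniteCoproducts C] (X : C) (n : ℕ) : C :=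
  ∐ (fun _ : Fin n => X)

/-- `uN u n : T_n ⟶ T_n` is the `n`-fold coproduct of the endomorphism `u : X ⟶ X`. -/
noncomputable def uN [HasFiniteCoproducts C] {X : C} (u : X ⟶ X) (n : ℕ) :
    T X n ⟶ T X n :=
  Limits.Sigma.map (fun _ : Fin n => u)

section

variable [HasFiniteCoproducts C] {X : C}

@[simp]
lemma uN_id (n : ℕ) : uN (𝟙 X) n = 𝟙 (T X n) :=
  Sigma.map_id

lemma ι_uN (u : X ⟶ X) {n : ℕ} (i : Fin n) :
    Sigma.ι (fun _ : Fin n => X) i ≫ uN u n = u ≫ Sigma.ι (fun _ : Fin n => X) i :=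
  Sigma.ι_map _ i

instance isSplitMono_ι_T {n : ℕ} (i : Fin n) :
    IsSplitMono (Sigma.ι (fun _ : Fin n => X) i) :=
  IsSplitMono.mk' ⟨Sigma.desc fun _ => 𝟙 X, Sigma.ι_desc _ i⟩

lemma uN_eq_id_iff {u : X ⟶ X} {n : ℕ} (hn : 0 < n) : uN u n = 𝟙 (T X n) ↔ u = 𝟙 X := by
  refine ⟨fun h => ?_, fun h => h ▸ uN_id n⟩
  let i : Fin n := ⟨0, hn⟩
  rw [← cancel_mono (Sigma.ι (fun _ : Fin n => X) i), ← ι_uN, h]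
  exact (Category.comp_id _).trans (Category.id_comp _).symm

end

theorem idempotent_condition_three_implies_two_iff_id_general
    [HasFiniteCoproducts C] (X : C) (u : X ⟶ X) :
    (∀ (r s : ℕ) (f : T X r ⟶ T X s),
        uN u r ≫ f = f ≫ uN u s → (uN u r ≫ f = f ∧ f ≫ uN u s = f)) ↔
      u = 𝟙 X := by
  constructor
  · intro h
    have hu₁ : uN u 1 = 𝟙 (T X 1) := by
      simpa using (h 1 1 (𝟙 _) (by simp)).1
    exact (uN_eq_id_iff Nat.one_pos).mp hu₁
  · rintro rfl r s f -
    simp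

/-- For an idempotent `u : X ⟶ X`, condition (3) `u_r ≫ f = f ≫ u_s` implies
condition (2) `u_r ≫ f = f` and `f ≫ u_s = f` for all morphisms `f : T_r ⟶ T_s`
if and only if `u = 𝟙 X`. -/
theorem idempotent_condition_three_implies_two_iff_id
    [HasFiniteCoproducts C] (X : C) (u : X ⟶ X) (hu : u ≫ u = u) :
    (∀ (r s : ℕ) (f : T X r ⟶ T X s),
        uN u r ≫ f = f ≫ uN u s → (uN u r ≫ f = f ∧ f ≫ uN u s = f)) ↔
      u = 𝟙 X :=
  idempotent_condition_three_implies_two_iff_id_general X u
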